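/- Let a > 0, b ∈ ℝ, and define l(n) = logit(1 − Φ(a·√n + b)) for n > 0, where Φ is the standard normal CDF and logit(x) = log(x) − log(1−x). Then l is differentiable on (0,∞) and lim_{n→∞} l′(n) = −a²/2. -/

import Mathlib

/-! With x = a√n + b the chain rule gives
l′(n) = -φ(x) / ((1 - Φ(x)) Φ(x)) · a / (2√n).
As x → ∞ we have Φ(x) → 1 and φ(x) / (1 - Φ(x)) ~ x (Mills' ratio, by L'Hôpital applied to
(1 - Φ(x)) / (φ(x) / x), whose ratio of derivatives is 1 / (1 + x⁻²)), while x · a / (2√n) → a² / 2. -/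

open Filter MeasureTheory Set

/-- Standard normal CDF. -/
noncomputable def Phi (x : ℝ) : ℝ :=
  ∫ t in Set.Iio x, (Real.sqrt (2 * Real.pi))⁻¹ * Real.exp (-t ^ 2 / 2)

/-- Standard normal density. -/
noncomputable def stdPdf (x : ℝ) : ℝ := (Real.sqrt (2 * Real.pi))⁻¹ * Real.exp (-x ^ 2 / 2)

/-- Standard normal quantile function. -/
noncomputable def PhiInv : ℝ → ℝ := Function.invFun Phi

/-- Logit function. -/
noncomputable def logit (x : ℝ) : ℝ := Real.log x - Real.log (1 - x)

open Topology

theorem hasDerivAt_setIntegral_Iio {E : Type*} [NormedAddCommGroup E] [NormedSpace ℝ E]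
    [CompleteSpace E] {f : ℝ → E} {x : ℝ} (hf : Integrable f) (hcont : ContinuousAt f x) :
    HasDerivAt (fun y => ∫ t in Iio y, f t) (f x) x := by
  have hsplit : (fun y => ∫ t in Iio y, f t) =
      fun y => (∫ t in Iio 0, f t) + ∫ t in (0 : ℝ)..y, f t := by
    funext y
    rw [← integral_Iic_eq_integral_Iio, ← integral_Iic_eq_integral_Iio,
      ← intervalIntegral.integral_Iic_sub_Iic hf.integrableOn hf.integrableOn, add_sub_cancel]
  rw [hsplit]
  exact (intervalIntegral.integral_hasDerivAt_right hf.intervalIntegrable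
    hf.aestronglyMeasurable.stronglyMeasurableAtFilter hcont).const_add _

theorem stdPdf_pos (x : ℝ) : 0 < stdPdf x := by
  unfold stdPdf; positivity

theorem continuous_stdPdf : Continuous stdPdf := by
  unfold stdPdf; fun_prop

theorem stdPdf_eq_gaussian : stdPdf = fun x => (√(2 * Real.pi))⁻¹ * Real.exp (-2⁻¹ * x ^ 2) := by
  funext x; simp only [stdPdf]; ring_nf

theorem integrable_stdPdf : Integrable stdPdf := by
  rw [stdPdf_eq_gaussian]
  exact (integrable_exp_neg_mul_sq (by norm_num)).const_mul _

theorem integral_stdPdf : ∫ x, stdPdf x = 1 := by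
  rw [stdPdf_eq_gaussian, integral_const_mul, integral_gaussian, div_inv_eq_mul, mul_comm Real.pi,
    inv_mul_cancel₀ (by positivity)]

theorem hasDerivAt_stdPdf (x : ℝ) : HasDerivAt stdPdf (-x * stdPdf x) x := by
  have hexp : HasDerivAt (fun y : ℝ => -y ^ 2 / 2) (-x) x :=
    ((hasDerivAt_pow 2 x).fun_neg.div_const 2).congr_deriv (by ring)
  exact (hexp.exp.const_mul _).congr_deriv (by simp only [stdPdf]; ring)

theorem tendsto_stdPdf_atTop : Tendsto stdPdf atTop (𝓝 0) := by
  have h : Tendsto (fun x : ℝ => -x ^ 2 / 2) atTop atBot :=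
    (tendsto_neg_atTop_atBot.comp (tendsto_pow_atTop two_ne_zero)).atBot_div_const two_pos
  have := (Real.tendsto_exp_atBot.comp h).const_mul (√(2 * Real.pi))⁻¹
  rwa [mul_zero] at this

theorem hasDerivAt_Phi (x : ℝ) : HasDerivAt Phi (stdPdf x) x :=
  hasDerivAt_setIntegral_Iio integrable_stdPdf continuous_stdPdf.continuousAt

theorem strictMono_Phi : StrictMono Phi :=
  strictMono_of_hasDerivAt_pos hasDerivAt_Phi stdPdf_pos

theorem tendsto_Phi_atTop : Tendsto Phi atTop (𝓝 1) := by
  have := tendsto_setIntegral_of_monotone (μ := volume) (f := stdPdf)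
    (fun x : ℝ => measurableSet_Iio) (fun _ _ h => Iio_subset_Iio h) integrable_stdPdf.integrableOn
  rwa [iUnion_Iio, setIntegral_univ, integral_stdPdf] at this

theorem Phi_pos (x : ℝ) : 0 < Phi x :=
  (setIntegral_nonneg measurableSet_Iio fun t _ => (stdPdf_pos t).le).trans_lt
    (strictMono_Phi (sub_one_lt x))

theorem Phi_lt_one (x : ℝ) : Phi x < 1 :=
  (strictMono_Phi (lt_add_one x)).trans_le
    (strictMono_Phi.monotone.ge_of_tendsto tendsto_Phi_atTop _)

theorem tendsto_stdPdf_div_one_sub_Phi_div_self :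
    Tendsto (fun x => stdPdf x / (1 - Phi x) / x) atTop (𝓝 1) := by
  have hg : ∀ x : ℝ, x ≠ 0 →
      HasDerivAt (fun x => stdPdf x / x) (-(1 + (x ^ 2)⁻¹) * stdPdf x) x := fun x hx =>
    ((hasDerivAt_stdPdf x).div (hasDerivAt_id x) hx).congr_deriv
      (by simp only [id]; field_simp; ring)
  have hratio : Tendsto (fun x : ℝ => -stdPdf x / (-(1 + (x ^ 2)⁻¹) * stdPdf x)) atTop (𝓝 1) := by
    have h := ((tendsto_inv_atTop_zero.comp (tendsto_pow_atTop two_ne_zero)).const_add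
      (1 : ℝ)).inv₀ (by norm_num)
    rw [add_zero, inv_one] at h
    refine h.congr fun x => ?_
    have hφ := (stdPdf_pos x).ne'
    simp only [Function.comp_apply]
    field_simp
  have hlhopital : Tendsto (fun x => (1 - Phi x) / (stdPdf x / x)) atTop (𝓝 1) := by
    refine HasDerivAt.lhopital_zero_atTop
      (Eventually.of_forall fun x => (hasDerivAt_Phi x).const_sub 1)
      ((eventually_ne_atTop 0).mono hg)
      (Eventually.of_forall fun x => (mul_neg_of_neg_of_pos (neg_neg_of_pos (by positivity))
        (stdPdf_pos x)).ne)
      ?_ ?_ hratio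
    · simpa using tendsto_Phi_atTop.const_sub 1
    · simpa using tendsto_stdPdf_atTop.div_atTop tendsto_id
  simpa [inv_div, div_right_comm] using hlhopital.inv₀ one_ne_zero

theorem hasDerivAt_logit {y : ℝ} (h0 : y ≠ 0) (h1 : y ≠ 1) :
    HasDerivAt logit (y * (1 - y))⁻¹ y := by
  have h1' : 1 - y ≠ 0 := sub_ne_zero.2 (Ne.symm h1)
  exact ((Real.hasDerivAt_log h0).sub (((hasDerivAt_id y).const_sub 1).log h1')).congr_deriv
    (by simp only [id]; field_simp; ring)

theorem hasDerivAt_logit_one_sub_Phi (x : ℝ) :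
    HasDerivAt (fun x => logit (1 - Phi x)) (-(stdPdf x / ((1 - Phi x) * Phi x))) x := by
  have h := (hasDerivAt_logit (sub_pos.2 (Phi_lt_one x)).ne' (by linarith [Phi_pos x])).comp x
    ((hasDerivAt_Phi x).const_sub 1)
  exact h.congr_deriv (by rw [sub_sub_cancel]; ring)

theorem tendsto_mul_sqrt_add_mul_div_two_sqrt (a b : ℝ) :
    Tendsto (fun n => (a * √n + b) * (a / (2 * √n))) atTop (𝓝 (a ^ 2 / 2)) := by
  have h := (Real.tendsto_sqrt_atTop.const_mul_atTop two_pos).inv_tendsto_atTop.const_mul (a * b)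
  rw [mul_zero] at h
  have h' := h.const_add (a ^ 2 / 2)
  rw [add_zero] at h'
  refine h'.congr' ?_
  filter_upwards [eventually_gt_atTop 0] with n hn
  have hsqrt := Real.sqrt_pos.2 hn
  simp only [Pi.inv_apply]
  field_simp

theorem stmt3 (a b : ℝ) (ha : 0 < a) :
    DifferentiableOn ℝ (fun n : ℝ => logit (1 - Phi (a * Real.sqrt n + b))) (Set.Ioi 0) ∧
    Filter.Tendsto (deriv (fun n : ℝ => logit (1 - Phi (a * Real.sqrt n + b))))
      Filter.atTop (nhds (-a ^ 2 / 2)) := by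
  set x : ℝ → ℝ := fun n => a * √n + b
  have hderiv : ∀ n ∈ Ioi (0 : ℝ), HasDerivAt (fun n => logit (1 - Phi (x n)))
      (-(stdPdf (x n) / ((1 - Phi (x n)) * Phi (x n))) * (a * (1 / (2 * √n)))) n :=
    fun n hn => (hasDerivAt_logit_one_sub_Phi (x n)).comp n
      (((Real.hasDerivAt_sqrt (ne_of_gt hn)).const_mul a).add_const b)
  refine ⟨fun n hn => (hderiv n hn).differentiableAt.differentiableWithinAt, ?_⟩
  have hx : Tendsto x atTop atTop :=
    tendsto_atTop_add_const_right _ b (Real.tendsto_sqrt_atTop.const_mul_atTop ha)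
  have hlim := (((tendsto_stdPdf_div_one_sub_Phi_div_self.comp hx).div
    (tendsto_Phi_atTop.comp hx) one_ne_zero).mul (tendsto_mul_sqrt_add_mul_div_two_sqrt a b)).neg
  rw [div_one, one_mul, ← neg_div] at hlim
  refine hlim.congr' ?_
  filter_upwards [eventually_gt_atTop 0, hx.eventually_gt_atTop 0] with n hn hxn
  rw [(hderiv n hn).deriv]
  have hΦ₁ := (sub_pos.2 (Phi_lt_one (x n))).ne'
  have hΦ₀ := (Phi_pos (x n)).ne'
  have hsqrt := Real.sqrt_pos.2 hn
  simp only [Pi.div_apply, Function.comp_apply, x] at hxn ⊢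
  field_simp
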